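/- arXiv:1501.01647 — 4 statements merged into one kernel-verified Lean document; each statement's English description precedes it below -/
import Mathlib

section
/- The Moser spindle has chromatic number 4. -/
/-! In a 3-colouring, the two tips of a rhombus must share a colour, as both differ from the two
colours on the middle edge. The rhombi of the spindle thus give vertices 0, 3 and 6 one colour,
contradicting the edge 06. -/

/-- The Moser spindle: vertices `{0,…,6}`, edges
`{01,02,12,13,23,34,45,35,46,56,06,16}`. -/
def moser : SimpleGraph (Fin 7) :=
  SimpleGraph.fromEdgeSet
    {s(0,1), s(0,2), s(1,2), s(1,3), s(2,3), s(3,4), s(4,5), s(3,5),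
     s(4,6), s(5,6), s(0,6), s(1,6)}

namespace SimpleGraph

theorem Coloring.eq_of_diamond {V α : Type*} {G : SimpleGraph V} [Fintype α] [DecidableEq α]
    (hα : Fintype.card α ≤ 3) (C : G.Coloring α) {x y b c : V} (hbc : G.Adj b c)
    (hxb : G.Adj x b) (hxc : G.Adj x c) (hyb : G.Adj y b) (hyc : G.Adj y c) : C x = C y := by
  by_contra hxy
  have hcard : ({C x, C y, C b, C c} : Finset α).card = 4 := by
    rw [Finset.card_insert_of_notMem, Finset.card_insert_of_notMem, Finset.card_pair (C.valid hbc)]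
    · simp [C.valid hyb, C.valid hyc]
    · simp [hxy, C.valid hxb, C.valid hxc]
  have := hcard ▸ Finset.card_le_univ ({C x, C y, C b, C c} : Finset α)
  omega

end SimpleGraph

open SimpleGraph

instance : DecidableRel moser.Adj := by
  unfold moser
  infer_instance

theorem moser_colorable_four : moser.Colorable 4 :=
  ⟨Coloring.mk ![0, 1, 2, 0, 1, 2, 3] (by decide)⟩

theorem moser_not_colorable_three : ¬ moser.Colorable 3 := by
  rintro ⟨C⟩
  have h03 : C 0 = C 3 := C.eq_of_diamond (Fintype.card_fin 3).le (b := 1) (c := 2)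
    (by decide) (by decide) (by decide) (by decide) (by decide)
  have h36 : C 3 = C 6 := C.eq_of_diamond (Fintype.card_fin 3).le (b := 4) (c := 5)
    (by decide) (by decide) (by decide) (by decide) (by decide)
  exact C.valid (show moser.Adj 0 6 by decide) (h03.trans h36)

/-- The Moser spindle has chromatic number 4. -/
theorem moser_chromaticNumber : moser.chromaticNumber = 4 :=
  chromaticNumber_eq_iff_colorable_not_colorable.mpr
    ⟨moser_colorable_four, moser_not_colorable_three⟩
end

section
/- The fractional chromatic number of the Moser spindle equals 7/2. -/
/-- A fractional coloring of a finite graph `G` assigns nonnegative weights to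
(independent) finsets of vertices so that every vertex is covered by total
weight at least 1.  `fracChromNum G` is the infimum of the total weight. -/
noncomputable def fracChromNum {V : Type*} [Fintype V] [DecidableEq V]
    (G : SimpleGraph V) : ℝ :=
  sInf {t : ℝ | ∃ w : Finset V → ℝ,
    (∀ S, 0 ≤ w S) ∧
    (∀ S, w S ≠ 0 → ∀ u ∈ S, ∀ v ∈ S, ¬ G.Adj u v) ∧
    (∀ v : V, 1 ≤ ∑ S ∈ Finset.univ.filter (fun S => v ∈ S), w S) ∧
    (∑ S : Finset V, w S = t)}

/-!
The Moser spindle has no independent set of three vertices, so a fractional coloring, which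
covers each of the 7 vertices with weight at least 1 using sets of size at most 2, has total
weight at least 7/2. Conversely, the complement contains the Hamiltonian cycle 0-3-6-2-4-1-5-0,
whose 7 edges are independent pairs covering every vertex exactly twice; weight 1/2 on each of
them is a fractional coloring of total weight 7/2.
-/

open Finset

section FracChromNum

variable {V : Type*} [Fintype V] [DecidableEq V] {G : SimpleGraph V}

theorem sum_sum_filter_mem_eq_sum_card_mul {R : Type*} [NonAssocSemiring R] (w : Finset V → R) :
    ∑ v, ∑ S ∈ univ.filter (fun S => v ∈ S), w S = ∑ S, (#S : R) * w S := by
  simp only [sum_filter]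
  rw [sum_comm]
  refine sum_congr rfl fun S _ => ?_
  rw [sum_ite_mem, univ_inter, sum_const, nsmul_eq_mul]

def fracColoringWeights (G : SimpleGraph V) : Set ℝ :=
  {t : ℝ | ∃ w : Finset V → ℝ,
    (∀ S, 0 ≤ w S) ∧
    (∀ S, w S ≠ 0 → ∀ u ∈ S, ∀ v ∈ S, ¬ G.Adj u v) ∧
    (∀ v : V, 1 ≤ ∑ S ∈ Finset.univ.filter (fun S => v ∈ S), w S) ∧
    (∑ S : Finset V, w S = t)}

theorem fracChromNum_eq_sInf (G : SimpleGraph V) : fracChromNum G = sInf (fracColoringWeights G) :=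
  rfl

theorem fracColoringWeights_nonneg {t : ℝ} (ht : t ∈ fracColoringWeights G) : 0 ≤ t := by
  obtain ⟨w, hw, -, -, rfl⟩ := ht
  exact sum_nonneg fun S _ => hw S

theorem card_div_mem_fracColoringWeights (F : Finset (Finset V)) {k : ℕ} (hk : 0 < k)
    (hind : ∀ S ∈ F, ∀ u ∈ S, ∀ v ∈ S, ¬ G.Adj u v)
    (hcov : ∀ v, #(F.filter (fun S => v ∈ S)) = k) :
    (#F / k : ℝ) ∈ fracColoringWeights G := by
  have hk' : (0 : ℝ) < k := Nat.cast_pos.mpr hk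
  let w : Finset V → ℝ := fun S => if S ∈ F then 1 / k else 0
  have hsum (s : Finset (Finset V)) : ∑ S ∈ s, w S = #(s ∩ F) / k := by
    rw [sum_ite_mem, sum_const, nsmul_eq_mul, mul_one_div]
  refine ⟨w, fun S => by positivity, fun S hS => hind S ?_, fun v => ?_, by rw [hsum, univ_inter]⟩
  · by_contra hSF
    exact hS (if_neg hSF)
  · rw [hsum, filter_inter, univ_inter, hcov, div_self hk'.ne']

theorem card_mem_fracColoringWeights (G : SimpleGraph V) :
    (Fintype.card V : ℝ) ∈ fracColoringWeights G := by
  have h := card_div_mem_fracColoringWeights (G := G) (univ.map ⟨_, singleton_injective⟩)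
    one_pos (fun S hS u hu v hv => ?_) fun v => ?_
  · simpa using h
  · obtain ⟨a, -, rfl⟩ := mem_map.mp hS
    simp only [Function.Embedding.coeFn_mk, mem_singleton] at hu hv
    exact hu ▸ hv ▸ G.irrefl
  · rw [card_eq_one]
    refine ⟨{v}, ext fun S => ?_⟩
    simp only [mem_filter, mem_map, mem_univ, true_and, Function.Embedding.coeFn_mk, mem_singleton]
    constructor
    · rintro ⟨⟨a, rfl⟩, hv⟩
      rw [mem_singleton.mp hv]
    · rintro rfl
      exact ⟨⟨v, rfl⟩, mem_singleton_self v⟩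

theorem fracChromNum_le_of_cover (F : Finset (Finset V)) {k : ℕ} (hk : 0 < k)
    (hind : ∀ S ∈ F, ∀ u ∈ S, ∀ v ∈ S, ¬ G.Adj u v)
    (hcov : ∀ v, #(F.filter (fun S => v ∈ S)) = k) :
    fracChromNum G ≤ #F / k := by
  rw [fracChromNum_eq_sInf]
  exact csInf_le ⟨0, fun _ => fracColoringWeights_nonneg⟩
    (card_div_mem_fracColoringWeights F hk hind hcov)

theorem card_div_le_fracChromNum {α : ℕ}
    (hα : ∀ S : Finset V, (∀ u ∈ S, ∀ v ∈ S, ¬ G.Adj u v) → #S ≤ α) :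
    (Fintype.card V : ℝ) / α ≤ fracChromNum G := by
  rw [fracChromNum_eq_sInf]
  refine le_csInf ⟨_, card_mem_fracColoringWeights G⟩ ?_
  rintro t ⟨w, hw, hind, hcov, rfl⟩
  refine div_le_of_le_mul₀ (Nat.cast_nonneg α) (sum_nonneg fun S _ => hw S) ?_
  calc (Fintype.card V : ℝ) = ∑ _v : V, (1 : ℝ) := by simp
    _ ≤ ∑ v, ∑ S ∈ univ.filter (fun S => v ∈ S), w S := sum_le_sum fun v _ => hcov v
    _ = ∑ S, (#S : ℝ) * w S := sum_sum_filter_mem_eq_sum_card_mul w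
    _ ≤ ∑ S, (α : ℝ) * w S := by
        refine sum_le_sum fun S _ => ?_
        rcases eq_or_ne (w S) 0 with h | h
        · simp [h]
        · exact mul_le_mul_of_nonneg_right (by exact_mod_cast hα S (hind S h)) (hw S)
    _ = (∑ S, w S) * α := by rw [← mul_sum, mul_comm]

end FracChromNum

instance inst_s2 : DecidableRel moser.Adj := fun a b =>
  decidable_of_iff' _ (by rw [moser, SimpleGraph.fromEdgeSet_adj])

set_option maxRecDepth 10000 in
theorem moser_card_le_two_of_indep (S : Finset (Fin 7))
    (hS : ∀ u ∈ S, ∀ v ∈ S, ¬ moser.Adj u v) : #S ≤ 2 := by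
  revert S; decide

def moserComplCycle : Finset (Finset (Fin 7)) :=
  {{0, 3}, {3, 6}, {6, 2}, {2, 4}, {4, 1}, {1, 5}, {5, 0}}

set_option maxRecDepth 10000 in
theorem moserComplCycle_indep : ∀ S ∈ moserComplCycle, ∀ u ∈ S, ∀ v ∈ S, ¬ moser.Adj u v := by
  decide

theorem moserComplCycle_cover (v : Fin 7) : #(moserComplCycle.filter (fun S => v ∈ S)) = 2 := by
  revert v; decide

/-- The fractional chromatic number of the Moser spindle equals `7/2`. -/
theorem moser_fracChromNum : fracChromNum moser = 7 / 2 := by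
  apply le_antisymm
  · have h := fracChromNum_le_of_cover moserComplCycle two_pos moserComplCycle_indep
      moserComplCycle_cover
    rwa [show #moserComplCycle = 7 from rfl] at h
  · have h := card_div_le_fracChromNum moser_card_le_two_of_indep
    rwa [Fintype.card_fin] at h
end

section
/- The plane can be properly 7-colored avoiding distance 1: there exists a function c : ℝ² → Fin 7 such that whenever two points have Euclidean distance exactly 1, they receive different colors. Consequently the chromatic number of the unit-distance graph on ℝ² is at most 7. -/
/-!
Colour each point of the plane by the colour of a point of the triangular lattice with spacing
`3/4` lying within its covering radius `√3/4`, the lattice point `i e₁ + j e₂` getting colour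
`i + 3j mod 7`. Points at distance `1 > √3/2` never share their lattice point, and distinct lattice
points of equal colour differ by a nonzero vector of the sublattice `7 ∣ i + 3j`, on which the
norm form `i² + ij + j²` is a positive multiple of `7`; so they are at distance at least
`3√7/4`, whereas the lattice points of two points at distance `1` are at most `1 + √3/2` apart.
-/

/-- The unit-distance graph on the Euclidean plane `ℝ²`. -/
def planeGraph : SimpleGraph (EuclideanSpace ℝ (Fin 2)) where
  Adj x y := dist x y = 1
  symm := ⟨fun x y h => by show dist y x = 1; rw [dist_comm]; exact h⟩
  loopless := ⟨fun x h => by simp at h⟩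

theorem ne_of_dist_eq_of_cover {X ι κ : Type*} [PseudoMetricSpace X] (p : ι → X)
    (center : X → ι) (col : ι → κ) {r d : ℝ} (hcover : ∀ x, dist x (p (center x)) ≤ r)
    (hsep : ∀ i j, i ≠ j → col i = col j → d + 2 * r < dist (p i) (p j)) (hrd : 2 * r < d)
    {x y : X} (hxy : dist x y = d) : col (center x) ≠ col (center y) := by
  intro hcol
  have hx := hcover x
  have hy := hcover y
  by_cases hsame : center x = center y
  · have := dist_triangle_right x y (p (center y))
    rw [hsame] at hx
    linarith
  · have := hsep _ _ hsame hcol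
    have := dist_triangle4 (p (center x)) x y (p (center y))
    rw [dist_comm] at hx
    linarith

/-- The squared length of `a • u + b • v` for unit vectors `u`, `v` at angle `π / 3`. -/
def hexForm (a b : ℝ) : ℝ := a ^ 2 + a * b + b ^ 2

theorem hexForm_neg (a b : ℝ) : hexForm (-a) (-b) = hexForm a b := by
  unfold hexForm; ring

theorem exists_hexForm_le_of_add_le_one {f g : ℝ} (hf : 0 ≤ f) (hg : 0 ≤ g) (hfg : f + g ≤ 1) :
    ∃ a b : ℤ, hexForm (f - a) (g - b) ≤ 1 / 3 := by
  unfold hexForm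
  by_cases h₀ : 2 * f + g ≤ 1 ∧ f + 2 * g ≤ 1
  · exact ⟨0, 0, by push_cast; nlinarith⟩
  rcases le_total g f with hgf | hfg_le
  · have h₁ : 1 ≤ 2 * f + g := by by_contra; exact h₀ ⟨by linarith, by linarith⟩
    refine ⟨1, 0, ?_⟩
    push_cast
    nlinarith [mul_nonneg (sub_nonneg.2 h₁) (sub_nonneg.2 hfg), mul_nonneg (sub_nonneg.2 hgf) hg,
      mul_nonneg (sub_nonneg.2 h₁) (sub_nonneg.2 hgf), mul_nonneg hg (sub_nonneg.2 hfg)]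
  · have h₁ : 1 ≤ f + 2 * g := by by_contra; exact h₀ ⟨by linarith, by linarith⟩
    refine ⟨0, 1, ?_⟩
    push_cast
    nlinarith [mul_nonneg (sub_nonneg.2 h₁) (sub_nonneg.2 hfg), mul_nonneg (sub_nonneg.2 hfg_le) hf,
      mul_nonneg (sub_nonneg.2 h₁) (sub_nonneg.2 hfg_le), mul_nonneg hf (sub_nonneg.2 hfg)]

theorem exists_int_hexForm_le (α β : ℝ) : ∃ a b : ℤ, hexForm (α - a) (β - b) ≤ 1 / 3 := by
  suffices h : ∃ a b : ℤ, hexForm (Int.fract α - a) (Int.fract β - b) ≤ 1 / 3 by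
    obtain ⟨a, b, h⟩ := h
    refine ⟨⌊α⌋ + a, ⌊β⌋ + b, ?_⟩
    convert h using 2 <;> push_cast [Int.fract] <;> ring
  have hα := Int.fract_nonneg α
  have hβ := Int.fract_nonneg β
  by_cases hsum : Int.fract α + Int.fract β ≤ 1
  · exact exists_hexForm_le_of_add_le_one hα hβ hsum
  · obtain ⟨a, b, h⟩ := exists_hexForm_le_of_add_le_one (f := 1 - Int.fract α)
      (g := 1 - Int.fract β) (by linarith [Int.fract_lt_one α])
      (by linarith [Int.fract_lt_one β]) (by linarith)
    refine ⟨1 - a, 1 - b, ?_⟩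
    rw [← hexForm_neg]
    convert h using 2 <;> push_cast <;> ring

theorem seven_le_hexForm_of_dvd {i j : ℤ} (h7 : 7 ∣ i + 3 * j) (hne : (i, j) ≠ 0) :
    7 ≤ hexForm i j := by
  obtain ⟨k, hk⟩ := h7
  have hpos : 0 < i ^ 2 + i * j + j ^ 2 := by
    rcases eq_or_ne j 0 with rfl | hj
    · have hi : i ≠ 0 := fun hi => hne (by simp [hi])
      simpa using sq_pos_of_ne_zero hi
    · nlinarith [sq_nonneg (2 * i + j), sq_pos_of_ne_zero hj]
  have hQ : i ^ 2 + i * j + j ^ 2 = 7 * (k * (i - 2 * j) + j ^ 2) := by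
    linear_combination (i - 2 * j) * hk
  have : 7 ≤ i ^ 2 + i * j + j ^ 2 := by omega
  unfold hexForm
  exact_mod_cast this

noncomputable def hexPoint (a b : ℝ) : EuclideanSpace ℝ (Fin 2) :=
  !₂[3 / 4 * a + 3 / 8 * b, 3 * √3 / 8 * b]

theorem dist_hexPoint_sq (a b c d : ℝ) :
    dist (hexPoint a b) (hexPoint c d) ^ 2 = 9 / 16 * hexForm (a - c) (b - d) := by
  rw [EuclideanSpace.dist_eq, Real.sq_sqrt (by positivity)]
  simp only [hexPoint, Fin.sum_univ_two, Real.dist_eq, sq_abs, Fin.isValue, Matrix.cons_val_zero,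
    Matrix.cons_val_one, Matrix.cons_val_fin_one]
  have := Real.sq_sqrt (show (0:ℝ) ≤ 3 by norm_num)
  unfold hexForm
  linear_combination (9 / 64 * (b - d) ^ 2) * this

theorem eq_hexPoint (x : EuclideanSpace ℝ (Fin 2)) :
    x = hexPoint (4 / 3 * x 0 - 4 * √3 / 9 * x 1) (8 * √3 / 9 * x 1) := by
  have := Real.sq_sqrt (show (0:ℝ) ≤ 3 by norm_num)
  ext i
  fin_cases i
  · simp only [Fin.zero_eta, Fin.isValue, hexPoint, Matrix.cons_val_zero]
    ring
  · simp only [Fin.mk_one, Fin.isValue, hexPoint, Matrix.cons_val_one, Matrix.cons_val_fin_one]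
    linear_combination (-x 1 / 3) * this

theorem exists_dist_hexPoint_le (x : EuclideanSpace ℝ (Fin 2)) :
    ∃ z : ℤ × ℤ, dist x (hexPoint z.1 z.2) ≤ √3 / 4 := by
  obtain ⟨a, b, h⟩ := exists_int_hexForm_le (4 / 3 * x 0 - 4 * √3 / 9 * x 1) (8 * √3 / 9 * x 1)
  refine ⟨(a, b), (pow_le_pow_iff_left₀ dist_nonneg (by positivity) two_ne_zero).1 ?_⟩
  nth_rewrite 1 [eq_hexPoint x]
  rw [dist_hexPoint_sq, div_pow, Real.sq_sqrt zero_le_three]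
  linarith

def hexColor (z : ℤ × ℤ) : ZMod 7 := z.1 + 3 * z.2

theorem lt_dist_hexPoint_of_hexColor_eq {z w : ℤ × ℤ} (hne : z ≠ w)
    (hcol : hexColor z = hexColor w) :
    1 + 2 * (√3 / 4) < dist (hexPoint z.1 z.2) (hexPoint w.1 w.2) := by
  have h7 : 7 ∣ (z.1 - w.1) + 3 * (z.2 - w.2) := by
    refine (ZMod.intCast_zmod_eq_zero_iff_dvd _ 7).1 ?_
    push_cast
    unfold hexColor at hcol
    linear_combination hcol
  have hsep := seven_le_hexForm_of_dvd h7 (by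
    rw [Ne, Prod.mk_eq_zero, sub_eq_zero, sub_eq_zero, ← Prod.ext_iff]; exact hne)
  have hsq : (1 + 2 * (√3 / 4)) ^ 2 < dist (hexPoint z.1 z.2) (hexPoint w.1 w.2) ^ 2 := by
    rw [dist_hexPoint_sq]
    push_cast at hsep
    have hsqrt : √3 < 7 / 4 := by rw [Real.sqrt_lt' (by norm_num)]; norm_num
    nlinarith [Real.sq_sqrt zero_le_three]
  exact (pow_lt_pow_iff_left₀ (by positivity) dist_nonneg two_ne_zero).1 hsq

noncomputable def hexCenter (x : EuclideanSpace ℝ (Fin 2)) : ℤ × ℤ :=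
  (exists_dist_hexPoint_le x).choose

noncomputable def hexColoring (x : EuclideanSpace ℝ (Fin 2)) : ZMod 7 :=
  hexColor (hexCenter x)

theorem hexColoring_ne_of_dist_eq_one {x y : EuclideanSpace ℝ (Fin 2)} (h : dist x y = 1) :
    hexColoring x ≠ hexColoring y :=
  ne_of_dist_eq_of_cover (fun z : ℤ × ℤ => hexPoint z.1 z.2) hexCenter hexColor
    (fun x => (exists_dist_hexPoint_le x).choose_spec)
    (fun _ _ => lt_dist_hexPoint_of_hexColor_eq)
    (by linarith [(Real.sqrt_lt' two_pos).2 (show (3:ℝ) < 2 ^ 2 by norm_num)]) h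

/-- The plane can be properly 7-colored avoiding distance 1; consequently the
chromatic number of the unit-distance graph on `ℝ²` is at most 7. -/
theorem plane_seven_coloring :
    (∃ c : EuclideanSpace ℝ (Fin 2) → Fin 7,
      ∀ x y : EuclideanSpace ℝ (Fin 2), dist x y = 1 → c x ≠ c y) ∧
    planeGraph.chromaticNumber ≤ 7 :=
  ⟨⟨hexColoring, fun _ _ => hexColoring_ne_of_dist_eq_one⟩,
    SimpleGraph.Colorable.chromaticNumber_le
      ⟨SimpleGraph.Coloring.mk hexColoring hexColoring_ne_of_dist_eq_one⟩⟩
end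

section
/- The chromatic number of the unit-distance graph on ℝ² is at least 4: there is no function c : ℝ² → Fin 3 such that c(x) ≠ c(y) whenever ‖x − y‖ = 1. -/
/-!
Two points at distance `√3` are the far vertices of a rhombus made of two unit equilateral
triangles, so a 3-colouring gives them the same colour: the two middle vertices and either far
vertex use up all three colours. Rotating a segment of length `√3` about one endpoint until its
other end has moved by `1` (the Moser spindle) then forces two points at distance `1` to share
a colour.
-/

theorem SimpleGraph.Coloring.eq_of_both_adj_to_edge {V : Type*} {G : SimpleGraph V}
    (C : G.Coloring (Fin 3)) {x y p q : V} (hpq : G.Adj p q)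
    (hxp : G.Adj x p) (hxq : G.Adj x q) (hyp : G.Adj y p) (hyq : G.Adj y q) :
    C x = C y := by
  have := C.valid hpq; have := C.valid hxp; have := C.valid hxq
  have := C.valid hyp; have := C.valid hyq
  omega

theorem EuclideanSpace.dist_eq_sqrt_fin_two (x y : EuclideanSpace ℝ (Fin 2)) :
    dist x y = √((x 0 - y 0) ^ 2 + (x 1 - y 1) ^ 2) := by
  simp [EuclideanSpace.dist_eq, Fin.sum_univ_two, Real.dist_eq, sq_abs]

theorem planeGraph_adj_iff (x y : EuclideanSpace ℝ (Fin 2)) :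
    planeGraph.Adj x y ↔ (x 0 - y 0) ^ 2 + (x 1 - y 1) ^ 2 = 1 := by
  rw [show planeGraph.Adj x y ↔ dist x y = 1 from Iff.rfl,
    EuclideanSpace.dist_eq_sqrt_fin_two, Real.sqrt_eq_one]

theorem dist_eq_sqrt_three_iff (x y : EuclideanSpace ℝ (Fin 2)) :
    dist x y = √3 ↔ (x 0 - y 0) ^ 2 + (x 1 - y 1) ^ 2 = 3 := by
  rw [EuclideanSpace.dist_eq_sqrt_fin_two, Real.sqrt_inj (by positivity) (by norm_num)]

theorem exists_unit_rhombus {x y : EuclideanSpace ℝ (Fin 2)} (h : dist x y = √3) :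
    ∃ p q, planeGraph.Adj p q ∧ planeGraph.Adj x p ∧ planeGraph.Adj x q ∧
      planeGraph.Adj y p ∧ planeGraph.Adj y q := by
  rw [dist_eq_sqrt_three_iff] at h
  have hs : √3 ^ 2 = 3 := Real.sq_sqrt (by norm_num)
  -- `p, q` lie on the perpendicular bisector of `xy`, at distance `1/2` from its midpoint
  set u := √3 * (x 1 - y 1) / 6
  set v := √3 * (x 0 - y 0) / 6
  refine ⟨!₂[(x 0 + y 0) / 2 + u, (x 1 + y 1) / 2 - v],
    !₂[(x 0 + y 0) / 2 - u, (x 1 + y 1) / 2 + v], ?_, ?_, ?_, ?_, ?_⟩ <;>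
  simp only [planeGraph_adj_iff, u, v, Matrix.cons_val_zero, Matrix.cons_val_one]
  · linear_combination (1 / 3) * h + ((x 0 - y 0) ^ 2 + (x 1 - y 1) ^ 2) / 9 * hs
  all_goals linear_combination (1 / 3) * h + ((x 0 - y 0) ^ 2 + (x 1 - y 1) ^ 2) / 36 * hs

theorem planeGraph_coloring_eq_of_dist_eq_sqrt_three (C : planeGraph.Coloring (Fin 3))
    {x y : EuclideanSpace ℝ (Fin 2)} (h : dist x y = √3) : C x = C y := by
  obtain ⟨p, q, hpq, hxp, hxq, hyp, hyq⟩ := exists_unit_rhombus h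
  exact C.eq_of_both_adj_to_edge hpq hxp hxq hyp hyq

-- `z₂` is where the unit circle about `z₁` meets the circle of radius `√3` about `x`
theorem exists_moser_spindle : ∃ x z₁ z₂ : EuclideanSpace ℝ (Fin 2),
    dist x z₁ = √3 ∧ dist x z₂ = √3 ∧ planeGraph.Adj z₁ z₂ := by
  have hs : √3 ^ 2 = 3 := Real.sq_sqrt (by norm_num)
  have ht : √33 ^ 2 = 33 := Real.sq_sqrt (by norm_num)
  refine ⟨!₂[0, 0], !₂[√3, 0], !₂[5 * √3 / 6, √33 / 6], ?_, ?_, ?_⟩ <;>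
  simp only [dist_eq_sqrt_three_iff, planeGraph_adj_iff, Matrix.cons_val_zero,
    Matrix.cons_val_one]
  · linear_combination hs
  · linear_combination (25 / 36) * hs + (1 / 36) * ht
  · linear_combination (1 / 36) * hs + (1 / 36) * ht

theorem planeGraph_not_colorable_three : ¬ planeGraph.Colorable 3 := by
  rintro ⟨C⟩
  obtain ⟨x, z₁, z₂, h₁, h₂, hz⟩ := exists_moser_spindle
  exact C.valid hz ((planeGraph_coloring_eq_of_dist_eq_sqrt_three C h₁).symm.trans
    (planeGraph_coloring_eq_of_dist_eq_sqrt_three C h₂))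

/-- The chromatic number of the unit-distance graph on `ℝ²` is at least 4:
there is no 3-coloring of the plane avoiding distance 1. -/
theorem plane_chromatic_ge_four :
    4 ≤ planeGraph.chromaticNumber ∧
    ¬ ∃ c : EuclideanSpace ℝ (Fin 2) → Fin 3,
        ∀ x y : EuclideanSpace ℝ (Fin 2), dist x y = 1 → c x ≠ c y := by
  refine ⟨SimpleGraph.le_chromaticNumber_iff_colorable.2 fun m hm => ?_, ?_⟩
  · by_contra hm4
    exact planeGraph_not_colorable_three (hm.mono (by norm_cast at hm4; omega))
  · rintro ⟨c, hc⟩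
    exact planeGraph_not_colorable_three ⟨SimpleGraph.Coloring.mk c fun h => hc _ _ h⟩
end
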